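/- Let A and B be n×n positive semidefinite complex matrices, and set a = tr(A), b = tr(B). Then ‖B(A+B)^2 − (A+B)^2 B‖_1 ≤ a^2 b + a b^2 = ((a+b)^3 − a^3 − b^3)/3. -/

import Mathlib

open scoped ComplexOrder

/-- The trace norm `‖Z‖₁ = tr ((Zᴴ Z)^{1/2})` of a square complex matrix, i.e. the sum of its
singular values. -/
noncomputable def traceNorm {n : ℕ} (Z : Matrix (Fin n) (Fin n) ℂ) : ℝ :=
  ((Matrix.posSemidef_conjTranspose_mul_self Z).1.eigenvectorUnitary.1 *
      Matrix.diagonal ((fun x : ℝ => (x : ℂ)) ∘ (fun x : ℝ => Real.sqrt x) ∘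
        (Matrix.posSemidef_conjTranspose_mul_self Z).1.eigenvalues) *
      (star (Matrix.posSemidef_conjTranspose_mul_self Z).1.eigenvectorUnitary.1 :
        Matrix (Fin n) (Fin n) ℂ)).trace.re

/-!
Write `S = A + B` and `C = BA - AB`. Then `Z = [B, S²] = SC + CS` is skew-Hermitian, hence normal,
so `|Z| = WZ` for a contraction `W`, and
`‖Z‖₁ = Re tr (W (SC + CS)) = Re tr ((CW + WC) S) ≤ ‖CW + WC‖ tr S ≤ 2 ‖C‖ (a + b)`.
Shifting `A` and `B` by half their norms does not change `C` and brings their spectra into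
`[-‖A‖/2, ‖A‖/2]` and `[-‖B‖/2, ‖B‖/2]`, so `‖C‖ ≤ ‖A‖ ‖B‖ / 2 ≤ ab / 2`.
-/

open Matrix
open scoped Matrix.Norms.L2Operator MatrixOrder

section CStarAlgebra

variable {A : Type*} [CStarAlgebra A] [PartialOrder A] [StarOrderedRing A]

lemma norm_sub_algebraMap_half_norm_le {a : A} (ha : 0 ≤ a) :
    ‖a - algebraMap ℝ A (‖a‖ / 2)‖ ≤ ‖a‖ / 2 := by
  have hcfc : a - algebraMap ℝ A (‖a‖ / 2) = cfc (fun x : ℝ => x - ‖a‖ / 2) a := by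
    rw [cfc_sub (fun x : ℝ => x) (fun _ => ‖a‖ / 2) a, cfc_id' ℝ a, cfc_const (‖a‖ / 2) a]
  rw [hcfc]
  refine norm_cfc_le (by positivity) fun x hx => ?_
  have h0 : 0 ≤ x := spectrum_nonneg_of_nonneg ha hx
  have h1 : x ≤ ‖a‖ :=
    (le_algebraMap_iff_spectrum_le (.of_nonneg ha)).mp IsSelfAdjoint.le_algebraMap_norm_self x hx
  rw [Real.norm_eq_abs, abs_le]
  constructor <;> linarith

lemma norm_commutator_le_of_nonneg {a b : A} (ha : 0 ≤ a) (hb : 0 ≤ b) :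
    ‖a * b - b * a‖ ≤ ‖a‖ * ‖b‖ / 2 := by
  set α := algebraMap ℝ A (‖a‖ / 2)
  set β := algebraMap ℝ A (‖b‖ / 2)
  have hshift : a * b - b * a = (a - α) * (b - β) - (b - β) * (a - α) := by
    have hαb : α * b = b * α := Algebra.commutes _ b
    have hβa : β * a = a * β := Algebra.commutes _ a
    have hαβ : α * β = β * α := Algebra.commutes _ β
    simp only [sub_mul, mul_sub, hαb, hβa, hαβ]
    abel
  calc ‖a * b - b * a‖ = ‖(a - α) * (b - β) - (b - β) * (a - α)‖ := by rw [hshift]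
    _ ≤ ‖a - α‖ * ‖b - β‖ + ‖b - β‖ * ‖a - α‖ :=
      (norm_sub_le _ _).trans (add_le_add (norm_mul_le _ _) (norm_mul_le _ _))
    _ ≤ ‖a‖ / 2 * (‖b‖ / 2) + ‖b‖ / 2 * (‖a‖ / 2) := by
      have := norm_sub_algebraMap_half_norm_le ha
      have := norm_sub_algebraMap_half_norm_le hb
      gcongr
    _ = ‖a‖ * ‖b‖ / 2 := by ring

end CStarAlgebra

lemma isStarNormal_of_star_eq_neg {R : Type*} [Ring R] [Star R] {x : R} (hx : star x = -x) :
    IsStarNormal x :=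
  ⟨by rw [hx]; exact (Commute.refl x).neg_left⟩

lemma norm_mul_add_mul_le {R : Type*} [NonUnitalSeminormedRing R] (a b : R) :
    ‖a * b + b * a‖ ≤ 2 * ‖a‖ * ‖b‖ := by
  linarith [norm_add_le (a * b) (b * a), norm_mul_le a b, norm_mul_le b a, mul_comm ‖a‖ ‖b‖]

namespace Matrix

variable {ι : Type*} [Fintype ι] [DecidableEq ι]

lemma IsHermitian.re_trace_eq_sum_eigenvalues {A : Matrix ι ι ℂ} (hA : A.IsHermitian) :
    A.trace.re = ∑ i, hA.eigenvalues i := by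
  simp [hA.trace_eq_sum_eigenvalues]

lemma PosSemidef.norm_le_re_trace {A : Matrix ι ι ℂ} (hA : A.PosSemidef) :
    ‖A‖ ≤ A.trace.re := by
  have htr := hA.isHermitian.re_trace_eq_sum_eigenvalues
  have hle (i : ι) : hA.1.eigenvalues i ≤ A.trace.re :=
    htr ▸ Finset.single_le_sum (fun j _ => hA.eigenvalues_nonneg j) (Finset.mem_univ i)
  rw [CStarAlgebra.norm_le_iff_le_algebraMap A
    (htr ▸ Finset.sum_nonneg fun i _ => hA.eigenvalues_nonneg i) hA.nonneg]
  refine le_algebraMap_of_spectrum_le fun x hx => ?_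
  obtain ⟨i, rfl⟩ := hA.1.spectrum_real_eq_range_eigenvalues ▸ hx
  exact hle i

lemma PosSemidef.norm_commutator_le {A B : Matrix ι ι ℂ} (hA : A.PosSemidef)
    (hB : B.PosSemidef) : ‖A * B - B * A‖ ≤ A.trace.re * B.trace.re / 2 := by
  have hAtr := hA.norm_le_re_trace
  have hBtr := hB.norm_le_re_trace
  have := mul_le_mul hAtr hBtr (norm_nonneg B) ((norm_nonneg A).trans hAtr)
  linarith [norm_commutator_le_of_nonneg hA.nonneg hB.nonneg]

lemma norm_apply_le_l2_opNorm (N : Matrix ι ι ℂ) (i j : ι) : ‖N i j‖ ≤ ‖N‖ :=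
  calc ‖N i j‖ ≤ ‖WithLp.toLp 2 (N.col j)‖ := by
        simpa using PiLp.norm_apply_le (WithLp.toLp 2 (N.col j)) i
    _ ≤ ‖N‖ := by simpa using l2_opNorm_mulVec N (EuclideanSpace.single j 1)

lemma norm_trace_mul_le (M : Matrix ι ι ℂ) {A : Matrix ι ι ℂ} (hA : A.PosSemidef) :
    ‖(M * A).trace‖ ≤ ‖M‖ * A.trace.re := by
  obtain ⟨U, hU⟩ : ∃ U : unitaryGroup ι ℂ, U = hA.1.eigenvectorUnitary := ⟨_, rfl⟩
  have hMA : (M * A).trace =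
      ∑ i, (star (U : Matrix ι ι ℂ) * M * U) i i * hA.1.eigenvalues i := by
    conv_lhs => rw [hA.1.spectral_theorem, Unitary.conjStarAlgAut_apply, ← mul_assoc,
      ← mul_assoc, trace_mul_cycle, ← mul_assoc]
    simp [trace, mul_diagonal, hU]
  have hconj : ‖star (U : Matrix ι ι ℂ) * M * U‖ = ‖M‖ := by
    rw [CStarRing.norm_mul_coe_unitary, ← Unitary.coe_star, CStarRing.norm_coe_unitary_mul]
  rw [hMA, hA.isHermitian.re_trace_eq_sum_eigenvalues, Finset.mul_sum]
  refine (norm_sum_le _ _).trans (Finset.sum_le_sum fun i _ => ?_)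
  rw [norm_mul, Complex.norm_real, Real.norm_of_nonneg (hA.eigenvalues_nonneg i), ← hconj]
  exact mul_le_mul_of_nonneg_right (norm_apply_le_l2_opNorm _ i i) (hA.eigenvalues_nonneg i)

lemma exists_norm_le_one_cfcAbs_eq_mul {Z : Matrix ι ι ℂ} (hZ : IsStarNormal Z) :
    ∃ W : Matrix ι ι ℂ, ‖W‖ ≤ 1 ∧ CFC.abs Z = W * Z := by
  have hcont {f : ℂ → ℂ} : ContinuousOn f (spectrum ℂ Z) := (finite_spectrum Z).continuousOn _
  refine ⟨cfc (fun z : ℂ => star z / ‖z‖) Z, norm_cfc_le zero_le_one fun z _ => ?_, ?_⟩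
  · rcases eq_or_ne z 0 with h | h <;> simp [h]
  · calc CFC.abs Z = cfc (fun z : ℂ => star z / ‖z‖ * z) Z := by
          rw [CFC.abs_eq_cfcₙ_coe_norm ℂ Z, cfcₙ_eq_cfc]
          refine cfc_congr fun z _ => ?_
          rcases eq_or_ne z 0 with h | h
          · simp [h]
          · have : (‖z‖ : ℂ) ≠ 0 := by simpa using h
            rw [div_mul_eq_mul_div, Complex.star_def, Complex.conj_mul', eq_div_iff this]
            simp [sq]
      _ = _ := by rw [cfc_mul _ _ _ hcont hcont, cfc_id' ℂ Z]

lemma trace_mul_anticommutator {R : Type*} [CommRing R] (W S C : Matrix ι ι R) :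
    (W * (S * C + C * S)).trace = ((C * W + W * C) * S).trace := by
  rw [mul_add, add_mul, trace_add, trace_add, ← mul_assoc, ← mul_assoc, trace_mul_cycle W S C]

end Matrix

theorem traceNorm_eq_re_trace_cfcAbs {n : ℕ} (Z : Matrix (Fin n) (Fin n) ℂ) :
    traceNorm Z = (CFC.abs Z).trace.re := by
  have h := posSemidef_conjTranspose_mul_self Z
  rw [CFC.abs, star_eq_conjTranspose, CFC.sqrt_eq_real_sqrt _ h.nonneg, cfcₙ_eq_cfc, h.1.cfc_eq]
  rfl

/-- For positive semidefinite `A`, `B` with `a = tr A`, `b = tr B`: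
`‖B (A+B)² − (A+B)² B‖₁ ≤ a² b + a b² = ((a+b)³ − a³ − b³)/3`. -/
theorem traceNorm_commutator_square_le
    {n : ℕ} (A B : Matrix (Fin n) (Fin n) ℂ)
    (hA : A.PosSemidef) (hB : B.PosSemidef)
    (a b : ℝ) (ha : a = A.trace.re) (hb : b = B.trace.re) :
    traceNorm (B * (A + B) ^ 2 - (A + B) ^ 2 * B) ≤ a ^ 2 * b + a * b ^ 2 ∧
      a ^ 2 * b + a * b ^ 2 = ((a + b) ^ 3 - a ^ 3 - b ^ 3) / 3 := by
  refine ⟨?_, by ring⟩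
  set S := A + B
  set C := B * A - A * B
  have hZ : B * S ^ 2 - S ^ 2 * B = S * C + C * S := by simp only [S, C]; noncomm_ring
  have hZ_skew : star (S * C + C * S) = -(S * C + C * S) := by
    simp only [S, C, star_add, star_sub, star_mul, hA.isHermitian.star_eq,
      hB.isHermitian.star_eq]
    noncomm_ring
  obtain ⟨W, hW, habs⟩ := exists_norm_le_one_cfcAbs_eq_mul (isStarNormal_of_star_eq_neg hZ_skew)
  have ha0 : 0 ≤ a := ha ▸ (norm_nonneg A).trans hA.norm_le_re_trace
  have hb0 : 0 ≤ b := hb ▸ (norm_nonneg B).trans hB.norm_le_re_trace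
  have hC : ‖C‖ ≤ a * b / 2 := by rw [ha, hb, mul_comm]; exact hB.norm_commutator_le hA
  have hS : S.trace.re = a + b := by simp [S, trace_add, ha, hb]
  rw [hZ, traceNorm_eq_re_trace_cfcAbs, habs, trace_mul_anticommutator]
  calc ((C * W + W * C) * S).trace.re ≤ ‖C * W + W * C‖ * S.trace.re :=
        (Complex.re_le_norm _).trans (norm_trace_mul_le _ (hA.add hB))
    _ ≤ 2 * ‖C‖ * ‖W‖ * (a + b) := by rw [hS]; gcongr; exact norm_mul_add_mul_le C W
    _ ≤ 2 * (a * b / 2) * 1 * (a + b) := by gcongr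
    _ = a ^ 2 * b + a * b ^ 2 := by ring
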